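/- Fix p > 2, N ≥ 1, and the cutoff Θ_N as above. The truncated nonlinearity q_N(ξ) = Θ_N(‖ξ‖_{L^p}) ξ (k*ξ) is globally Lipschitz from L^p(D) to [L^p(D)]²: there exists L_{N,p} > 0 such that ‖q_N(ξ) - q_N(η)‖_{L^p} ≤ L_{N,p} ‖ξ - η‖_{L^p} for all ξ, η ∈ L^p(D). -/

import Mathlib

open Real MeasureTheory

/-- The fundamental domain `D = [0,2π]²` of the torus. -/
noncomputable def torusD : Set (ℝ × ℝ) := Set.Icc ((0:ℝ), (0:ℝ)) (2 * π, 2 * π)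

/-!
For `‖η‖_p ≤ ‖ξ‖_p` (the other case is symmetric) write `a = ‖ξ‖_p`, `b = ‖η‖_p`, `d = ‖ξ - η‖_p`.
Splitting `Θ(a) ξ Kξ - Θ(b) η Kη = Θ(a) (ξ - η) Kξ + Θ(a) η K(ξ - η) + (Θ(a) - Θ(b)) η Kη`
and bounding each `K` factor in `L^∞` by `C_p` times an `L^p` norm gives the estimate
`C_p (Θ(a) (a + b) d + |Θ(a) - Θ(b)| b²)`. The cutoff makes this linear in `d`:
`Θ(a) a ≤ N + 1`, and `|Θ(a) - Θ(b)| b²` vanishes when `b ≥ N + 1` and is at most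
`2 (N + 1)² d` otherwise, since `Θ` is `2`-Lipschitz.
-/

open scoped ENNReal NNReal

section Cutoff

variable {Θ : ℝ → ℝ} {M : ℝ}

lemma cutoff_mul_le (hM : 0 ≤ M) (hrange : ∀ s : ℝ, 0 ≤ s → Θ s ∈ Set.Icc (0:ℝ) 1)
    (hzero : ∀ s : ℝ, M ≤ s → Θ s = 0) {a : ℝ} (ha : 0 ≤ a) : Θ a * a ≤ M := by
  rcases lt_or_ge a M with haM | haM
  · exact (mul_le_of_le_one_left ha (hrange a ha).2).trans haM.le
  · simpa [hzero a haM] using hM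

lemma abs_sub_cutoff_mul_sq_le {ℓ : ℝ≥0} (hzero : ∀ s : ℝ, M ≤ s → Θ s = 0)
    (hlip : LipschitzWith ℓ Θ) {a b : ℝ} (hb : 0 ≤ b) (hba : b ≤ a) :
    |Θ a - Θ b| * b ^ 2 ≤ ℓ * M ^ 2 * (a - b) := by
  rcases lt_or_ge b M with hbM | hbM
  · have hΘ : |Θ a - Θ b| ≤ ℓ * (a - b) := by
      simpa [Real.dist_eq, abs_of_nonneg (sub_nonneg.2 hba)] using hlip.dist_le_mul a b
    calc |Θ a - Θ b| * b ^ 2 ≤ ℓ * (a - b) * M ^ 2 := by gcongr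
      _ = ℓ * M ^ 2 * (a - b) := by ring
  · simp only [hzero a (hbM.trans hba), hzero b hbM, sub_self, abs_zero, zero_mul]
    have := sub_nonneg.2 hba
    positivity

lemma cutoff_weights_le {ℓ : ℝ≥0} (hM : 0 ≤ M)
    (hrange : ∀ s : ℝ, 0 ≤ s → Θ s ∈ Set.Icc (0:ℝ) 1) (hzero : ∀ s : ℝ, M ≤ s → Θ s = 0)
    (hlip : LipschitzWith ℓ Θ) {a b d : ℝ} (hb : 0 ≤ b) (hba : b ≤ a) (hd : a - b ≤ d) :
    |Θ a| * (a + b) * d + |Θ a - Θ b| * b ^ 2 ≤ (2 * M + ℓ * M ^ 2) * d := by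
  have ha : 0 ≤ a := hb.trans hba
  have hd0 : 0 ≤ d := (sub_nonneg.2 hba).trans hd
  have hΘa := hrange a ha
  have h₁ : |Θ a| * (a + b) ≤ 2 * M := by
    rw [abs_of_nonneg hΘa.1]
    nlinarith [mul_le_mul_of_nonneg_left hba hΘa.1, cutoff_mul_le hM hrange hzero ha]
  have h₂ := abs_sub_cutoff_mul_sq_le hzero hlip hb hba
  have h₃ : (ℓ : ℝ) * M ^ 2 * (a - b) ≤ ℓ * M ^ 2 * d := by gcongr
  nlinarith

end Cutoff

section Product

variable {α E : Type*} [MeasurableSpace α] {μ : Measure α} {q : ℝ≥0∞} [NormedAddCommGroup E]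

lemma ae_norm_le_of_eLpNorm_top_le {g : α → E} {c : ℝ} (hc : 0 ≤ c)
    (h : eLpNorm g ∞ μ ≤ .ofReal c) : ∀ᵐ x ∂μ, ‖g x‖ ≤ c := by
  rw [eLpNorm_exponent_top] at h
  filter_upwards [ae_le_eLpNormEssSup (f := g) (μ := μ)] with x hx
  rw [← ofReal_norm] at hx
  exact (ENNReal.ofReal_le_ofReal_iff hc).1 (hx.trans h)

lemma eLpNorm_le_of_ae_norm_le_add (hq : 1 ≤ q) {F : α → E} {f g : α → ℝ}
    (hf : MemLp f q μ) (hg : MemLp g q μ) {A B : ℝ} (hA : 0 ≤ A) (hB : 0 ≤ B)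
    (h : ∀ᵐ x ∂μ, ‖F x‖ ≤ A * |f x| + B * |g x|) :
    eLpNorm F q μ ≤ .ofReal (A * lpNorm f q μ + B * lpNorm g q μ) := by
  have hbound : MemLp (A • |f| + B • |g|) q μ := (hf.abs.const_smul A).add (hg.abs.const_smul B)
  calc eLpNorm F q μ ≤ eLpNorm (A • |f| + B • |g|) q μ := eLpNorm_mono_ae_real h
    _ = .ofReal (lpNorm (A • |f| + B • |g|) q μ) := (ofReal_lpNorm hbound).symm
    _ ≤ .ofReal (A * lpNorm f q μ + B * lpNorm g q μ) := by
        gcongr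
        refine (lpNorm_add_le (hf.abs.const_smul A) hq).trans_eq ?_
        rw [lpNorm_const_smul, lpNorm_const_smul, lpNorm_abs hf.1, lpNorm_abs hg.1]
        simp [abs_of_nonneg hA, abs_of_nonneg hB]

variable [NormedSpace ℝ E]

lemma norm_smul_smul_sub_smul_smul_le {s t a b Cu Cv Cuv : ℝ} {u v : E} (hu : ‖u‖ ≤ Cu)
    (hv : ‖v‖ ≤ Cv) (huv : ‖u - v‖ ≤ Cuv) :
    ‖s • a • u - t • b • v‖ ≤ |s| * Cu * |a - b| + (|s| * Cuv + |s - t| * Cv) * |b| := by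
  calc ‖s • a • u - t • b • v‖ = ‖s • (a - b) • u + s • b • (u - v) + (s - t) • b • v‖ := by
        congr 1; module
    _ ≤ ‖s • (a - b) • u‖ + ‖s • b • (u - v)‖ + ‖(s - t) • b • v‖ := norm_add₃_le
    _ = |s| * ‖u‖ * |a - b| + (|s| * ‖u - v‖ + |s - t| * ‖v‖) * |b| := by
        simp only [norm_smul, Real.norm_eq_abs]; ring
    _ ≤ |s| * Cu * |a - b| + (|s| * Cuv + |s - t| * Cv) * |b| := by gcongr

lemma eLpNorm_smul_smul_sub_smul_smul_le (hq : 1 ≤ q) {K : (α → ℝ) → α → E}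
    (hKadd : ∀ f g, K (f + g) = K f + K g) {C : ℝ} (hC : 0 ≤ C)
    (hK : ∀ f, MemLp f q μ → eLpNorm (K f) ∞ μ ≤ .ofReal (C * lpNorm f q μ))
    {f g : α → ℝ} (hf : MemLp f q μ) (hg : MemLp g q μ) (s t : ℝ) :
    eLpNorm (fun x => s • f x • K f x - t • g x • K g x) q μ ≤
      .ofReal (C * (|s| * (lpNorm f q μ + lpNorm g q μ) * lpNorm (f - g) q μ
        + |s - t| * lpNorm g q μ ^ 2)) := by
  have hKsub : K (f - g) = K f - K g := by rw [eq_sub_iff_add_eq, ← hKadd, sub_add_cancel]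
  have hCnorm : ∀ h : α → ℝ, 0 ≤ C * lpNorm h q μ := fun h => mul_nonneg hC lpNorm_nonneg
  have hKbound : ∀ h, MemLp h q μ → ∀ᵐ x ∂μ, ‖K h x‖ ≤ C * lpNorm h q μ := fun h hh =>
    ae_norm_le_of_eLpNorm_top_le (hCnorm h) (hK h hh)
  have hpt : ∀ᵐ x ∂μ, ‖s • f x • K f x - t • g x • K g x‖ ≤
      |s| * (C * lpNorm f q μ) * |f x - g x|
        + (|s| * (C * lpNorm (f - g) q μ) + |s - t| * (C * lpNorm g q μ)) * |g x| := by
    filter_upwards [hKbound f hf, hKbound g hg, hKbound _ (hf.sub hg)] with x hKf hKg hKfg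
    rw [hKsub, Pi.sub_apply] at hKfg
    exact norm_smul_smul_sub_smul_smul_le hKf hKg hKfg
  refine (eLpNorm_le_of_ae_norm_le_add hq (hf.sub hg) hg
    (mul_nonneg (abs_nonneg s) (hCnorm f))
    (add_nonneg (mul_nonneg (abs_nonneg s) (hCnorm _)) (mul_nonneg (abs_nonneg _) (hCnorm g)))
    hpt).trans_eq ?_
  congr 1
  ring

end Product

theorem truncated_nonlinearity_lipschitz_general
    (p : ℝ) (hp : 2 < p) (N : ℝ) (hN : 1 ≤ N)
    (Θ : ℝ → ℝ) (hΘdiff : ContDiff ℝ 1 Θ)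
    (hΘrange : ∀ s : ℝ, 0 ≤ s → Θ s ∈ Set.Icc (0:ℝ) 1)
    (hΘzero : ∀ s : ℝ, N + 1 ≤ s → Θ s = 0)
    (hΘder : ∀ s : ℝ, |deriv Θ s| ≤ 2)
    (Cp : ℝ) (hCp : 0 < Cp)
    -- `K` is the (linear) Biot-Savart operator `ξ ↦ k * ξ`
    (K : (ℝ × ℝ → ℝ) → (ℝ × ℝ → ℝ × ℝ))
    (hKadd : ∀ ξ η : ℝ × ℝ → ℝ, K (ξ + η) = K ξ + K η)
    -- the Biot-Savart estimate `‖k*ξ‖_{L^∞} ≤ C_p ‖ξ‖_{L^p}`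
    (hK : ∀ ξ : ℝ × ℝ → ℝ, MemLp ξ (ENNReal.ofReal p) (volume.restrict torusD) →
      eLpNorm (K ξ) ⊤ (volume.restrict torusD)
        ≤ ENNReal.ofReal (Cp * (eLpNorm ξ (ENNReal.ofReal p) (volume.restrict torusD)).toReal)) :
    ∃ L : ℝ, 0 < L ∧
      ∀ ξ η : ℝ × ℝ → ℝ,
        MemLp ξ (ENNReal.ofReal p) (volume.restrict torusD) →
        MemLp η (ENNReal.ofReal p) (volume.restrict torusD) →
        eLpNorm
          (fun x => Θ ((eLpNorm ξ (ENNReal.ofReal p) (volume.restrict torusD)).toReal) •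
              (ξ x • K ξ x)
            - Θ ((eLpNorm η (ENNReal.ofReal p) (volume.restrict torusD)).toReal) •
              (η x • K η x))
          (ENNReal.ofReal p) (volume.restrict torusD)
        ≤ ENNReal.ofReal L *
            eLpNorm (ξ - η) (ENNReal.ofReal p) (volume.restrict torusD) := by
  set μ := volume.restrict torusD
  set q := ENNReal.ofReal p
  have hq : 1 ≤ q := ENNReal.one_le_ofReal.2 (by linarith)
  have hM : 0 ≤ N + 1 := by linarith
  have hΘlip : LipschitzWith 2 Θ := lipschitzWith_of_nnnorm_deriv_le
    (hΘdiff.differentiable one_ne_zero) fun s => by exact_mod_cast hΘder s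
  have hK' : ∀ ξ, MemLp ξ q μ → eLpNorm (K ξ) ∞ μ ≤ .ofReal (Cp * lpNorm ξ q μ) :=
    fun ξ hξ => toReal_eLpNorm hξ.1 ▸ hK ξ hξ
  refine ⟨Cp * (2 * (N + 1) + 2 * (N + 1) ^ 2), by positivity, fun ξ η hξ hη => ?_⟩
  rw [toReal_eLpNorm hξ.1, toReal_eLpNorm hη.1, ← ofReal_lpNorm (hξ.sub hη),
    ← ENNReal.ofReal_mul (by positivity)]
  wlog hle : lpNorm η q μ ≤ lpNorm ξ q μ generalizing ξ η
  · rw [← eLpNorm_neg, lpNorm_sub_comm]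
    simpa only [Pi.neg_def, neg_sub] using this η ξ hη hξ (le_of_not_ge hle)
  refine (eLpNorm_smul_smul_sub_smul_smul_le hq hKadd hCp.le hK' hξ hη _ _).trans
    (ENNReal.ofReal_le_ofReal ?_)
  have hcut := cutoff_weights_le hM hΘrange hΘzero hΘlip lpNorm_nonneg hle
    (sub_le_iff_le_add'.2 (lpNorm_le_lpNorm_add_lpNorm_sub' hη hq))
  push_cast at hcut
  exact (mul_le_mul_of_nonneg_left hcut hCp.le).trans_eq (mul_assoc ..).symm

theorem truncated_nonlinearity_lipschitz
    (p : ℝ) (hp : 2 < p) (N : ℝ) (hN : 1 ≤ N)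
    (Θ : ℝ → ℝ) (hΘdiff : ContDiff ℝ 1 Θ)
    (hΘrange : ∀ s : ℝ, 0 ≤ s → Θ s ∈ Set.Icc (0:ℝ) 1)
    (hΘone : ∀ s : ℝ, 0 ≤ s → s < N → Θ s = 1)
    (hΘzero : ∀ s : ℝ, N + 1 ≤ s → Θ s = 0)
    (hΘder : ∀ s : ℝ, |deriv Θ s| ≤ 2)
    (Cp : ℝ) (hCp : 0 < Cp)
    -- `K` is the (linear) Biot-Savart operator `ξ ↦ k * ξ`
    (K : (ℝ × ℝ → ℝ) → (ℝ × ℝ → ℝ × ℝ))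
    (hKadd : ∀ ξ η : ℝ × ℝ → ℝ, K (ξ + η) = K ξ + K η)
    (hKsmul : ∀ (a : ℝ) (ξ : ℝ × ℝ → ℝ), K (a • ξ) = a • K ξ)
    -- the Biot-Savart estimate `‖k*ξ‖_{L^∞} ≤ C_p ‖ξ‖_{L^p}`
    (hK : ∀ ξ : ℝ × ℝ → ℝ, MemLp ξ (ENNReal.ofReal p) (volume.restrict torusD) →
      eLpNorm (K ξ) ⊤ (volume.restrict torusD)
        ≤ ENNReal.ofReal (Cp * (eLpNorm ξ (ENNReal.ofReal p) (volume.restrict torusD)).toReal)) :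
    ∃ L : ℝ, 0 < L ∧
      ∀ ξ η : ℝ × ℝ → ℝ,
        MemLp ξ (ENNReal.ofReal p) (volume.restrict torusD) →
        MemLp η (ENNReal.ofReal p) (volume.restrict torusD) →
        eLpNorm
          (fun x => Θ ((eLpNorm ξ (ENNReal.ofReal p) (volume.restrict torusD)).toReal) •
              (ξ x • K ξ x)
            - Θ ((eLpNorm η (ENNReal.ofReal p) (volume.restrict torusD)).toReal) •
              (η x • K η x))
          (ENNReal.ofReal p) (volume.restrict torusD)
        ≤ ENNReal.ofReal L *
            eLpNorm (ξ - η) (ENNReal.ofReal p) (volume.restrict torusD) :=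
  truncated_nonlinearity_lipschitz_general p hp N hN Θ hΘdiff hΘrange hΘzero hΘder Cp hCp K hKadd hK
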